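/- arXiv:1105.5944 — 3 statements merged into one kernel-verified Lean document; each statement's English description precedes it below -/
import Mathlib

section
/- Let λ : [0,1] → ℝ be convex and differentiable, let χₖ, χₖ₋₁ ∈ [0,1], and let Sₖ, Sₖ₋₁ ∈ ℝ. Then Sₖ(Sₖ − Sₖ₋₁)λ(χₖ₋₁) + (1/2)Sₖ²(χₖ − χₖ₋₁)λ′(χₖ) ≥ (1/2)(Sₖ²λ(χₖ) − Sₖ₋₁²λ(χₖ₋₁)), provided λ(χₖ₋₁) ≥ 0. -/
theorem discrete_elastic_convexity
    (lam : ℝ → ℝ) (hconv : ConvexOn ℝ (Set.Icc 0 1) lam)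
    (hdiff : ∀ x ∈ Set.Icc (0:ℝ) 1, DifferentiableAt ℝ lam x)
    (χk χkm : ℝ) (hk : χk ∈ Set.Icc (0:ℝ) 1) (hkm : χkm ∈ Set.Icc (0:ℝ) 1)
    (Sk Skm : ℝ) (hnonneg : 0 ≤ lam χkm) :
    Sk * (Sk - Skm) * lam χkm + (1/2) * Sk^2 * (χk - χkm) * deriv lam χk ≥
      (1/2) * (Sk^2 * lam χk - Skm^2 * lam χkm) := by
  have htang : lam χkm + (χk - χkm) * deriv lam χk ≥ lam χk := by
    rcases lt_trichotomy χkm χk with h | h | h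
    · have := hconv.slope_le_deriv hkm hk h (hdiff χk hk)
      rw [slope_def_field] at this
      have hd : 0 < χk - χkm := by linarith
      rw [div_le_iff₀ hd] at this
      linarith
    · simp [h]
    · have := hconv.deriv_le_slope hk hkm h (hdiff χk hk)
      rw [slope_def_field] at this
      have hd : 0 < χkm - χk := by linarith
      rw [le_div_iff₀ hd] at this
      linarith
  nlinarith [sq_nonneg (Sk - Skm), sq_nonneg Sk, mul_le_mul_of_nonneg_left htang (sq_nonneg Sk)]
end

section
/- Let c₁ : (0,∞) → (0,∞) be continuous, e₁(θ) = ∫₀^θ c₁(r)dr, G(z) = −∫_z^{v₀} c₁(s)/s² ds, and suppose 0 < vₖ < vₖ₋₁ ≤ v₀ satisfy e₁(vₖ) − e₁(vₖ₋₁) = −Cτ vₖ² for some C, τ > 0. Then G(vₖ₋₁) − G(vₖ) ≤ Cτ. -/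
theorem barrier_step_estimate
    (c₁ : ℝ → ℝ) (hc : ContinuousOn c₁ (Set.Ioi 0))
    (hpos : ∀ r > (0:ℝ), 0 < c₁ r)
    (v₀ : ℝ) (hv₀ : 0 < v₀)
    (e₁ G : ℝ → ℝ)
    (he : ∀ θ : ℝ, e₁ θ = ∫ r in (0:ℝ)..θ, c₁ r)
    (hG : ∀ z : ℝ, G z = -∫ s in z..v₀, c₁ s / s^2)
    (C τ vk vkm : ℝ) (hC : 0 < C) (hτ : 0 < τ)
    (h1 : 0 < vk) (h2 : vk < vkm) (h3 : vkm ≤ v₀)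
    (hrec : e₁ vk - e₁ vkm = -(C * τ * vk^2)) :
    G vkm - G vk ≤ C * τ := by
  have hvv : vk ≤ v₀ := le_trans h2.le h3
  have hvk2 : (0:ℝ) < vk ^ 2 := by positivity
  have hsub : Set.uIcc vk v₀ ⊆ Set.Ioi 0 := by
    rw [Set.uIcc_of_le hvv]
    intro x hx; exact lt_of_lt_of_le h1 hx.1
  have hc1 : ContinuousOn c₁ (Set.uIcc vk v₀) := hc.mono hsub
  have hf : ContinuousOn (fun s => c₁ s / s ^ 2) (Set.uIcc vk v₀) := by
    apply hc1.div (continuousOn_pow 2)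
    intro x hx
    have : 0 < x := hsub hx
    positivity
  have hsub1 : Set.uIcc vk vkm ⊆ Set.uIcc vk v₀ := by
    rw [Set.uIcc_of_le hvv, Set.uIcc_of_le h2.le]
    exact Set.Icc_subset_Icc le_rfl h3
  have hsub2 : Set.uIcc vkm v₀ ⊆ Set.uIcc vk v₀ := by
    rw [Set.uIcc_of_le hvv, Set.uIcc_of_le h3]
    exact Set.Icc_subset_Icc h2.le le_rfl
  -- integrabilities
  have hic : IntervalIntegrable c₁ MeasureTheory.volume vk vkm :=
    (hc1.mono hsub1).intervalIntegrable
  have hif1 : IntervalIntegrable (fun s => c₁ s / s ^ 2) MeasureTheory.volume vk vkm :=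
    (hf.mono hsub1).intervalIntegrable
  have hif2 : IntervalIntegrable (fun s => c₁ s / s ^ 2) MeasureTheory.volume vkm v₀ :=
    (hf.mono hsub2).intervalIntegrable
  -- e₁ vkm - e₁ vk = ∫ vk..vkm c₁
  have hkey : ∫ r in vk..vkm, c₁ r = C * τ * vk ^ 2 := by
    by_cases hI : IntervalIntegrable c₁ MeasureTheory.volume 0 vk
    · have hI2 : IntervalIntegrable c₁ MeasureTheory.volume 0 vkm := hI.trans hic
      have := intervalIntegral.integral_add_adjacent_intervals hI hic
      rw [he, he] at hrec
      linarith [this, hrec]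
    · have hI2 : ¬ IntervalIntegrable c₁ MeasureTheory.volume 0 vkm := by
        intro h
        exact hI (h.mono_set (by rw [Set.uIcc_of_le h1.le, Set.uIcc_of_le (le_trans h1.le h2.le)]; exact Set.Icc_subset_Icc le_rfl h2.le))
      rw [he, he, intervalIntegral.integral_undef hI, intervalIntegral.integral_undef hI2] at hrec
      exfalso
      nlinarith [mul_pos (mul_pos hC hτ) hvk2]
  -- G vkm - G vk = ∫ vk..vkm c₁ s / s^2
  have hGdiff : G vkm - G vk = ∫ s in vk..vkm, c₁ s / s ^ 2 := by
    rw [hG, hG]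
    have := intervalIntegral.integral_add_adjacent_intervals hif1 hif2
    linarith
  rw [hGdiff]
  have hmono : ∫ s in vk..vkm, c₁ s / s ^ 2 ≤ ∫ s in vk..vkm, c₁ s / vk ^ 2 := by
    apply intervalIntegral.integral_mono_on h2.le hif1 (hic.div_const _)
    intro x hx
    have hx0 : 0 < x := lt_of_lt_of_le h1 hx.1
    have hcx : 0 ≤ c₁ x := (hpos x hx0).le
    have hxx : vk ^ 2 ≤ x ^ 2 := by nlinarith [hx.1]
    exact div_le_div_of_nonneg_left hcx hvk2 hxx
  calc ∫ s in vk..vkm, c₁ s / s ^ 2 ≤ ∫ s in vk..vkm, c₁ s / vk ^ 2 := hmono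
    _ = (∫ s in vk..vkm, c₁ s) / vk ^ 2 := intervalIntegral.integral_div _ _
    _ = C * τ := by rw [hkey]; field_simp
end

section
/- Discrete comparison principle for the truncated scheme: let c* > 0, c_R > 0, τ > 0, and suppose θ, θ̃, v, ṽ are real numbers with v ≤ ṽ ≤ θ̃ and such that (c*/τ)(e(v) − e(ṽ)) = −c_R v², while (c(χ)/τ)(e(θ) − e(θ̃)) ≥ −c_R θ(θ⁺) pointwise (in the scalar, diffusion-free version), where e is strictly increasing, c(χ) ≥ c* > 0, and v > 0. Then θ ≥ v. (Scalar version: if c(χ)(e(θ) − e(θ̃)) ≥ −τ c_R θθ⁺, c*(e(v) − e(ṽ)) = −τ c_R v², θ̃ ≥ ṽ, v < ṽ, v > 0, then θ ≥ v.) -/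
theorem discrete_comparison_principle
    (e : ℝ → ℝ) (hmono : StrictMono e) (hcont : Continuous e)
    (cχ cstar cR τ θ θt v vt : ℝ)
    (hcs : 0 < cstar) (hc : cstar ≤ cχ) (hcR : 0 < cR) (hτ : 0 < τ)
    (hv : 0 < v) (hvv : v < vt) (hθt : vt ≤ θt)
    (h1 : cχ * (e θ - e θt) ≥ -(τ * cR * θ * max θ 0))
    (h2 : cstar * (e v - e vt) = -(τ * cR * v^2)) :
    v ≤ θ := by
  by_contra h
  push_neg at h
  have heθv : e θ < e v := hmono h
  have hevvt : e v < e vt := hmono hvv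
  have hevt : e vt ≤ e θt := hmono.monotone hθt
  by_cases hθ : θ ≤ 0
  · have hmax : max θ 0 = 0 := max_eq_right hθ
    rw [hmax] at h1
    have : cχ * (e θ - e θt) ≥ 0 := by simpa using h1
    nlinarith
  · push_neg at hθ
    have hmax : max θ 0 = θ := max_eq_left hθ.le
    rw [hmax] at h1
    have h3 : cχ * (e θ - e vt) ≤ cstar * (e θ - e vt) := by nlinarith
    have hcχ : 0 < cχ := lt_of_lt_of_le hcs hc
    have h4 : cχ * (e θ - e θt) ≤ cχ * (e θ - e vt) := by nlinarith
    have h5 : cstar * (e θ - e vt) < cstar * (e v - e vt) := by nlinarith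
    have h6 : -(τ * cR * θ * θ) < -(τ * cR * v ^ 2) := by linarith
    nlinarith [mul_pos (mul_pos hτ hcR) (mul_pos (by linarith : (0:ℝ) < v - θ) (by linarith : (0:ℝ) < v + θ))]
end
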